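/- For ψ ∈ {1, −1}, ∫_ℝ e^{−rT}·1{ψ·(S_T(z) − K) > 0}·φ(z) dz = e^{−rT}·Φ(ψd₂). -/

import Mathlib

/-!
The terminal price `z ↦ S_T(z)` is strictly increasing and crosses the strike `K` exactly at
`z = -d₂`. Hence the call pays on `{z > -d₂}` and the put on `{z < -d₂}`, and by the symmetry of
`φ` both events have standard normal probability `Φ(ψ d₂)`.
-/

open MeasureTheory

/-- The standard normal density. -/
noncomputable def gaussPDF (z : ℝ) : ℝ := (Real.sqrt (2 * Real.pi))⁻¹ * Real.exp (-z ^ 2 / 2)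

/-- The standard normal cumulative distribution function. -/
noncomputable def gaussCDF (x : ℝ) : ℝ := ∫ z in Set.Iic x, gaussPDF z

lemma gaussPDF_neg (z : ℝ) : gaussPDF (-z) = gaussPDF z := by
  simp [gaussPDF]

lemma integral_Ioi_neg_gaussPDF (x : ℝ) : ∫ z in Set.Ioi (-x), gaussPDF z = gaussCDF x := by
  rw [gaussCDF, ← integral_comp_neg_Iic]
  simp only [gaussPDF_neg]

lemma integral_Iio_gaussPDF (x : ℝ) : ∫ z in Set.Iio x, gaussPDF z = gaussCDF x := by
  rw [gaussCDF, integral_Iic_eq_integral_Iio]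

lemma integral_ite_pos_sign_mul_gaussPDF {g : ℝ → ℝ} (hg : StrictMono g) {d : ℝ}
    (hd : g (-d) = 0) {ψ : ℝ} (hψ : ψ = 1 ∨ ψ = -1) :
    ∫ z, (if 0 < ψ * g z then (1 : ℝ) else 0) * gaussPDF z = gaussCDF (ψ * d) := by
  have h_indicator : ∀ s : Set ℝ, (∀ z, 0 < ψ * g z ↔ z ∈ s) →
      ∫ z, (if 0 < ψ * g z then (1 : ℝ) else 0) * gaussPDF z = ∫ z, s.indicator gaussPDF z := by
    classical
    intro s hs
    congr 1 with z
    rw [ite_mul, one_mul, zero_mul, Set.indicator_apply]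
    exact if_congr (hs z) rfl rfl
  rcases hψ with rfl | rfl
  · rw [h_indicator (Set.Ioi (-d)) fun z => by rw [one_mul, ← hd, hg.lt_iff_lt, Set.mem_Ioi],
      integral_indicator measurableSet_Ioi, integral_Ioi_neg_gaussPDF, one_mul]
  · rw [h_indicator (Set.Iio (-d))
        fun z => by rw [neg_one_mul, neg_pos, ← hd, hg.lt_iff_lt, Set.mem_Iio],
      integral_indicator measurableSet_Iio, integral_Iio_gaussPDF, neg_one_mul]

lemma strictMono_mul_exp_add_mul_sub {S₀ b : ℝ} (hS : 0 < S₀) (hb : 0 < b) (a K : ℝ) :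
    StrictMono fun z => S₀ * Real.exp (a + b * z) - K := by
  intro x y hxy
  dsimp only
  gcongr

lemma mul_exp_at_neg_d₂_eq_strike {S₀ K T σ : ℝ} (r q : ℝ) (hS : 0 < S₀) (hK : 0 < K)
    (hT : 0 < T) (hσ : 0 < σ) :
    S₀ * Real.exp ((r - q - σ ^ 2 / 2) * T + σ * Real.sqrt T *
      -((Real.log (S₀ / K) + (r - q + σ ^ 2 / 2) * T) / (σ * Real.sqrt T) - σ * Real.sqrt T))
      = K := by
  have hsqrt : Real.sqrt T ^ 2 = T := Real.sq_sqrt hT.le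
  have hexponent : (r - q - σ ^ 2 / 2) * T + σ * Real.sqrt T *
      -((Real.log (S₀ / K) + (r - q + σ ^ 2 / 2) * T) / (σ * Real.sqrt T) - σ * Real.sqrt T)
      = Real.log (K / S₀) := by
    rw [Real.log_div hK.ne' hS.ne', Real.log_div hS.ne' hK.ne']
    field_simp
    linear_combination 2 * σ ^ 2 * hsqrt
  rw [hexponent, Real.exp_log (div_pos hK hS)]
  field_simp

/-- The conditional price of a cash-or-nothing option (`ψ = 1` call, `ψ = -1` put). -/
theorem stmt_10 (S₀ K T σ : ℝ) (r q : ℝ) (hS : 0 < S₀) (hK : 0 < K) (hT : 0 < T)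
    (hσ : 0 < σ) (ψ : ℝ) (hψ : ψ = 1 ∨ ψ = -1) :
    (∫ z : ℝ, Real.exp (-r * T)
        * (if 0 < ψ * (S₀ * Real.exp ((r - q - σ ^ 2 / 2) * T + σ * Real.sqrt T * z) - K)
            then (1 : ℝ) else 0)
        * gaussPDF z)
      = Real.exp (-r * T)
          * gaussCDF (ψ * ((Real.log (S₀ / K) + (r - q + σ ^ 2 / 2) * T) / (σ * Real.sqrt T)
              - σ * Real.sqrt T)) := by
  have hvol : 0 < σ * Real.sqrt T := by positivity
  have hcross := sub_eq_zero.mpr (mul_exp_at_neg_d₂_eq_strike r q hS hK hT hσ)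
  simp only [mul_assoc (Real.exp (-r * T))]
  rw [integral_const_mul,
    integral_ite_pos_sign_mul_gaussPDF (strictMono_mul_exp_add_mul_sub hS hvol _ K) hcross hψ]
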